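/- arXiv:1405.0480 — 2 statements merged into one kernel-verified Lean document; each statement's English description precedes it below -/
import Mathlib

section
/- For i = 1,…,n, let N_i ~ N(m_i, σ_i²), P_i Poisson with parameter λ_i > 0, (Y_j) i.i.d. independent of everything, and ε_i Bernoulli with parameter α_i = λ_i e^{-λ_i}, mutually independent across i. Denote by Q_{N_i}*Q_{(Y,P_i)} the law of N_i + Σ_{j=1}^{P_i} Y_j and Q_{N_i}*Q_{(Y₁,ε_i)} the law of N_i + ε_i Y₁. Then ‖⊗_{i=1}^n (Q_{N_i}*Q_{(Y,P_i)}) - ⊗_{i=1}^n (Q_{N_i}*Q_{(Y₁,ε_i)})‖_TV ≤ 2√(Σ_{i=1}^n λ_i²). -/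
open MeasureTheory

/-- Total variation distance `‖P - Q‖_TV = sup_A |P(A) - Q(A)|`. -/
noncomputable def tvDist {α : Type*} [MeasurableSpace α] (P Q : Measure α) : ℝ :=
  ⨆ A : {A : Set α // MeasurableSet A}, |(P A.1).toReal - (Q A.1).toReal|

/-- `k`-fold convolution power of a measure on `ℝ` (law of the sum of `k` i.i.d. copies). -/
noncomputable def convPow (ν : Measure ℝ) : ℕ → Measure ℝ
  | 0 => Measure.dirac 0
  | k + 1 => (convPow ν k).conv ν

/-! Total variation is subadditive over products, so it suffices to bound each coordinate. There
the compound Poisson law is the mixture `∑ₖ e^{-λ} λᵏ/k! μₖ`, with `μₖ` the law of `N + Y₁ + ⋯ + Yₖ`,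
and the Bernoulli law is `(1 - λe^{-λ}) μ₀ + λe^{-λ} μ₁`. Both contain `e^{-λ} μ₀ + λe^{-λ} μ₁`, and
the remainders have mass `1 - (1 + λ)e^{-λ} ≤ λ²`. Hence the distance of the products is at most
`min (1, ∑ λᵢ²) ≤ √(∑ λᵢ²)`. -/

instance isProbabilityMeasure_convPow (ν : Measure ℝ) [IsProbabilityMeasure ν] (k : ℕ) :
    IsProbabilityMeasure (convPow ν k) := by
  induction k with
  | zero => rw [convPow]; infer_instance
  | succ k _ => rw [convPow]; infer_instance

section TotalVariation

variable {α β : Type*} [MeasurableSpace α] [MeasurableSpace β]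

lemma tvDist_le {P Q : Measure α} {c : ℝ}
    (h : ∀ A, MeasurableSet A → |P.real A - Q.real A| ≤ c) : tvDist P Q ≤ c :=
  haveI : Nonempty {A : Set α // MeasurableSet A} := ⟨⟨∅, .empty⟩⟩
  ciSup_le fun A => h A.1 A.2

lemma abs_measureReal_sub_le_one (P Q : Measure α) [IsProbabilityMeasure P]
    [IsProbabilityMeasure Q] (A : Set α) : |P.real A - Q.real A| ≤ 1 :=
  abs_sub_le_iff.2
    ⟨by linarith [measureReal_le_one (μ := P) (s := A), measureReal_nonneg (μ := Q) (s := A)],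
      by linarith [measureReal_le_one (μ := Q) (s := A), measureReal_nonneg (μ := P) (s := A)]⟩

lemma tvDist_le_one (P Q : Measure α) [IsProbabilityMeasure P] [IsProbabilityMeasure Q] :
    tvDist P Q ≤ 1 :=
  tvDist_le fun A _ => abs_measureReal_sub_le_one P Q A

lemma abs_measureReal_sub_le_tvDist {P Q : Measure α} [IsProbabilityMeasure P]
    [IsProbabilityMeasure Q] {A : Set α} (hA : MeasurableSet A) :
    |P.real A - Q.real A| ≤ tvDist P Q :=
  le_ciSup (f := fun A : {A : Set α // MeasurableSet A} => |P.real A - Q.real A|)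
    ⟨1, Set.forall_mem_range.2 fun A => abs_measureReal_sub_le_one P Q A⟩ ⟨A, hA⟩

lemma tvDist_nonneg (P Q : Measure α) [IsProbabilityMeasure P] [IsProbabilityMeasure Q] :
    0 ≤ tvDist P Q :=
  (abs_nonneg _).trans (abs_measureReal_sub_le_tvDist (P := P) (Q := Q) .empty)

lemma tvDist_le_sqrt_of_le {P Q : Measure α} [IsProbabilityMeasure P] [IsProbabilityMeasure Q]
    {S : ℝ} (h : tvDist P Q ≤ S) : tvDist P Q ≤ Real.sqrt S :=
  Real.le_sqrt_of_sq_le (by nlinarith [tvDist_nonneg P Q, tvDist_le_one P Q])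

lemma tvDist_self (P : Measure α) : tvDist P P = 0 := by
  simp [tvDist]

lemma tvDist_triangle (P Q R : Measure α) [IsProbabilityMeasure P] [IsProbabilityMeasure Q]
    [IsProbabilityMeasure R] : tvDist P R ≤ tvDist P Q + tvDist Q R :=
  tvDist_le fun _ hA => (abs_sub_le _ _ _).trans
    (add_le_add (abs_measureReal_sub_le_tvDist hA) (abs_measureReal_sub_le_tvDist hA))

lemma tvDist_map_le {f : α → β} (hf : Measurable f) (P Q : Measure α)
    [IsProbabilityMeasure P] [IsProbabilityMeasure Q] :
    tvDist (P.map f) (Q.map f) ≤ tvDist P Q :=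
  tvDist_le fun _ hA => by
    rw [map_measureReal_apply hf hA, map_measureReal_apply hf hA]
    exact abs_measureReal_sub_le_tvDist (hf hA)

lemma measureReal_prod_eq_integral (μ : Measure α) (ν : Measure β) [IsFiniteMeasure ν]
    {A : Set (α × β)} (hA : MeasurableSet A) :
    (μ.prod ν).real A = ∫ x, ν.real (Prod.mk x ⁻¹' A) ∂μ := by
  rw [measureReal_def, Measure.prod_apply hA, ← integral_toReal
    (measurable_measure_prodMk_left hA).aemeasurable (ae_of_all _ fun _ => measure_lt_top _ _)]
  rfl

lemma tvDist_prod_left_le (μ : Measure α) (ν₁ ν₂ : Measure β) [IsProbabilityMeasure μ]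
    [IsProbabilityMeasure ν₁] [IsProbabilityMeasure ν₂] :
    tvDist (μ.prod ν₁) (μ.prod ν₂) ≤ tvDist ν₁ ν₂ := by
  refine tvDist_le fun A hA => ?_
  rw [measureReal_prod_eq_integral μ ν₁ hA, measureReal_prod_eq_integral μ ν₂ hA,
    ← integral_sub (Measure.integrable_measure_prodMk_left hA (measure_ne_top _ _))
      (Measure.integrable_measure_prodMk_left hA (measure_ne_top _ _))]
  simpa using norm_integral_le_of_norm_le_const (μ := μ)
    (ae_of_all _ fun x => (Real.norm_eq_abs _).trans_le
      (abs_measureReal_sub_le_tvDist (measurable_prodMk_left hA)))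

lemma tvDist_prod_right_le (μ₁ μ₂ : Measure α) (ν : Measure β) [IsProbabilityMeasure μ₁]
    [IsProbabilityMeasure μ₂] [IsProbabilityMeasure ν] :
    tvDist (μ₁.prod ν) (μ₂.prod ν) ≤ tvDist μ₁ μ₂ := by
  rw [← Measure.prod_swap (μ := ν), ← Measure.prod_swap (μ := ν)]
  exact (tvDist_map_le measurable_swap _ _).trans (tvDist_prod_left_le ν μ₁ μ₂)

lemma tvDist_prod_le (μ₁ μ₂ : Measure α) (ν₁ ν₂ : Measure β) [IsProbabilityMeasure μ₁]
    [IsProbabilityMeasure μ₂] [IsProbabilityMeasure ν₁] [IsProbabilityMeasure ν₂] :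
    tvDist (μ₁.prod ν₁) (μ₂.prod ν₂) ≤ tvDist μ₁ μ₂ + tvDist ν₁ ν₂ := by
  calc tvDist (μ₁.prod ν₁) (μ₂.prod ν₂)
      ≤ tvDist (μ₁.prod ν₁) (μ₁.prod ν₂) + tvDist (μ₁.prod ν₂) (μ₂.prod ν₂) :=
        tvDist_triangle _ _ _
    _ ≤ tvDist ν₁ ν₂ + tvDist μ₁ μ₂ :=
        add_le_add (tvDist_prod_left_le _ _ _) (tvDist_prod_right_le _ _ _)
    _ = tvDist μ₁ μ₂ + tvDist ν₁ ν₂ := add_comm _ _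

lemma tvDist_add_left_le (S R R' : Measure α) [IsFiniteMeasure S] {r : ℝ} (hr : 0 ≤ r)
    (hR : R Set.univ ≤ ENNReal.ofReal r) (hR' : R' Set.univ ≤ ENNReal.ofReal r) :
    tvDist (S + R) (S + R') ≤ r := by
  refine tvDist_le fun A _ => ?_
  have hRA : R A ≤ ENNReal.ofReal r := (measure_mono (Set.subset_univ A)).trans hR
  have hR'A : R' A ≤ ENNReal.ofReal r := (measure_mono (Set.subset_univ A)).trans hR'
  rw [measureReal_add_apply (measure_ne_top S A) (ne_top_of_le_ne_top ENNReal.ofReal_ne_top hRA),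
    measureReal_add_apply (measure_ne_top S A) (ne_top_of_le_ne_top ENNReal.ofReal_ne_top hR'A),
    add_sub_add_left_eq_sub]
  have h₁ : R.real A ≤ r := ENNReal.toReal_le_of_le_ofReal hr hRA
  have h₂ : R'.real A ≤ r := ENNReal.toReal_le_of_le_ofReal hr hR'A
  exact abs_sub_le_iff.2 ⟨by linarith [measureReal_nonneg (μ := R') (s := A)],
    by linarith [measureReal_nonneg (μ := R) (s := A)]⟩

lemma tvDist_pi_le {n : ℕ} {α : Fin n → Type*} [∀ i, MeasurableSpace (α i)]
    (P Q : ∀ i, Measure (α i)) [∀ i, IsProbabilityMeasure (P i)]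
    [∀ i, IsProbabilityMeasure (Q i)] :
    tvDist (Measure.pi P) (Measure.pi Q) ≤ ∑ i, tvDist (P i) (Q i) := by
  induction n with
  | zero => simp [Measure.pi_of_empty P, Measure.pi_of_empty Q, tvDist_self]
  | succ n ih =>
    have hsplit (R : ∀ i, Measure (α i)) [∀ i, IsProbabilityMeasure (R i)] :
        Measure.pi R = ((R 0).prod (Measure.pi fun j => R (Fin.succAbove 0 j))).map
          (MeasurableEquiv.piFinSuccAbove α 0).symm := by
      rw [← (measurePreserving_piFinSuccAbove R 0).map_eq, MeasurableEquiv.map_symm_map]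
    rw [hsplit P, hsplit Q, Fin.sum_univ_succAbove _ 0]
    exact (tvDist_map_le (MeasurableEquiv.measurable _) _ _).trans
      ((tvDist_prod_le _ _ _ _).trans (add_le_add le_rfl (ih _ _)))

end TotalVariation

section Mixture

variable {α : Type*} [MeasurableSpace α]

lemma MeasureTheory.Measure.sum_nat_eq_add_sum_succ (ν : ℕ → Measure α) :
    Measure.sum ν = ν 0 + Measure.sum fun k => ν (k + 1) := by
  ext s hs
  rw [Measure.add_apply, Measure.sum_apply _ hs, Measure.sum_apply _ hs]
  exact tsum_eq_zero_add' ENNReal.summable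

lemma isProbabilityMeasure_ofReal_one_sub_smul_add (μ₀ μ₁ : Measure α) [IsProbabilityMeasure μ₀]
    [IsProbabilityMeasure μ₁] {a : ℝ} (ha₀ : 0 ≤ a) (ha₁ : a ≤ 1) :
    IsProbabilityMeasure (ENNReal.ofReal (1 - a) • μ₀ + ENNReal.ofReal a • μ₁) :=
  ⟨by simp [← ENNReal.ofReal_add (sub_nonneg.2 ha₁) ha₀]⟩

variable (μ : ℕ → Measure α) [∀ k, IsProbabilityMeasure (μ k)] {p : ℕ → ℝ}

lemma sum_ofReal_smul_apply_univ (hp : ∀ k, 0 ≤ p k) (hsum : Summable p) :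
    (Measure.sum fun k => ENNReal.ofReal (p k) • μ k) Set.univ = ENNReal.ofReal (∑' k, p k) := by
  simp only [Measure.sum_apply _ MeasurableSet.univ, Measure.smul_apply, measure_univ,
    smul_eq_mul, mul_one]
  exact (ENNReal.ofReal_tsum_of_nonneg hp hsum).symm

lemma isProbabilityMeasure_sum_smul (hp : ∀ k, 0 ≤ p k) (hsum : HasSum p 1) :
    IsProbabilityMeasure (Measure.sum fun k => ENNReal.ofReal (p k) • μ k) :=
  ⟨by rw [sum_ofReal_smul_apply_univ μ hp hsum.summable, hsum.tsum_eq, ENNReal.ofReal_one]⟩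

lemma tvDist_sum_smul_le (hp : ∀ k, 0 ≤ p k) (hsum : HasSum p 1) :
    tvDist (Measure.sum fun k => ENNReal.ofReal (p k) • μ k)
      (ENNReal.ofReal (1 - p 1) • μ 0 + ENNReal.ofReal (p 1) • μ 1) ≤ 1 - p 0 - p 1 := by
  set r := 1 - p 0 - p 1
  have htail : HasSum (fun k => p (k + 2)) r := by
    simpa [Finset.sum_range_succ, r, sub_sub] using (hasSum_nat_add_iff' 2).2 hsum
  have hr : 0 ≤ r := htail.nonneg fun k => hp (k + 2)
  have hP : Measure.sum (fun k => ENNReal.ofReal (p k) • μ k) =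
      (ENNReal.ofReal (p 0) • μ 0 + ENNReal.ofReal (p 1) • μ 1) +
        Measure.sum fun k => ENNReal.ofReal (p (k + 2)) • μ (k + 2) := by
    rw [Measure.sum_nat_eq_add_sum_succ, Measure.sum_nat_eq_add_sum_succ, add_assoc]
  have hQ : ENNReal.ofReal (1 - p 1) • μ 0 + ENNReal.ofReal (p 1) • μ 1 =
      (ENNReal.ofReal (p 0) • μ 0 + ENNReal.ofReal (p 1) • μ 1) + ENNReal.ofReal r • μ 0 := by
    rw [show 1 - p 1 = p 0 + r by ring, ENNReal.ofReal_add (hp 0) hr, add_smul]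
    abel
  have : IsFiniteMeasure (ENNReal.ofReal (p 0) • μ 0 + ENNReal.ofReal (p 1) • μ 1) := ⟨by simp⟩
  rw [hP, hQ]
  refine tvDist_add_left_le _ _ _ hr ?_ ?_
  · rw [sum_ofReal_smul_apply_univ (fun k => μ (k + 2)) (fun k => hp _) htail.summable,
      htail.tsum_eq]
  · simp

end Mixture

section CompoundPoisson

open Real

lemma poisson_weight_nonneg {L : ℝ} (hL : 0 ≤ L) (k : ℕ) : 0 ≤ exp (-L) * L ^ k / k.factorial := by
  positivity

lemma hasSum_poisson_weight {L : ℝ} (hL : 0 ≤ L) :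
    HasSum (fun k : ℕ => exp (-L) * L ^ k / k.factorial) 1 :=
  ProbabilityTheory.hasSum_one_poissonMeasure ⟨L, hL⟩

lemma one_sub_exp_neg_sub_mul_exp_neg_le_sq {L : ℝ} (hL : 0 ≤ L) :
    1 - exp (-L) - L * exp (-L) ≤ L ^ 2 := by
  nlinarith [add_one_le_exp (-L), exp_pos (-L)]

variable (μG νY : Measure ℝ) [IsProbabilityMeasure μG] [IsProbabilityMeasure νY]

lemma isProbabilityMeasure_compoundPoisson {L : ℝ} (hL : 0 ≤ L) :
    IsProbabilityMeasure (Measure.sum fun k : ℕ =>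
      ENNReal.ofReal (exp (-L) * L ^ k / k.factorial) • μG.conv (convPow νY k)) :=
  isProbabilityMeasure_sum_smul _ (poisson_weight_nonneg hL) (hasSum_poisson_weight hL)

lemma isProbabilityMeasure_bernoulliCompound {L : ℝ} (hL : 0 ≤ L) :
    IsProbabilityMeasure (ENNReal.ofReal (1 - L * exp (-L)) • μG +
      ENNReal.ofReal (L * exp (-L)) • μG.conv νY) :=
  isProbabilityMeasure_ofReal_one_sub_smul_add _ _ (by positivity)
    ((mul_exp_neg_le_exp_neg_one L).trans (exp_le_one_iff.2 (by norm_num)))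

lemma tvDist_compoundPoisson_bernoulliCompound_le {L : ℝ} (hL : 0 ≤ L) :
    tvDist (Measure.sum fun k : ℕ =>
        ENNReal.ofReal (exp (-L) * L ^ k / k.factorial) • μG.conv (convPow νY k))
      (ENNReal.ofReal (1 - L * exp (-L)) • μG + ENNReal.ofReal (L * exp (-L)) • μG.conv νY) ≤
      L ^ 2 := by
  have h := tvDist_sum_smul_le (fun k => μG.conv (convPow νY k)) (poisson_weight_nonneg hL)
    (hasSum_poisson_weight hL)
  simp only [convPow, Measure.conv_dirac_zero, Measure.dirac_zero_conv, pow_zero, pow_one,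
    Nat.factorial_zero, Nat.factorial_one, Nat.cast_one, mul_one, div_one] at h
  rw [mul_comm (exp (-L)) L] at h
  exact h.trans (one_sub_exp_neg_sub_mul_exp_neg_le_sq hL)

end CompoundPoisson

theorem tvDist_pi_compoundPoisson_bernoulli_general {n : ℕ} (m : Fin n → ℝ) (σ : Fin n → ℝ)
    (l : Fin n → ℝ) (hl : ∀ i, 0 < l i)
    (νY : Measure ℝ) [IsProbabilityMeasure νY] :
    tvDist
      (Measure.pi fun i =>
        Measure.sum fun k : ℕ =>
          (ENNReal.ofReal (Real.exp (-(l i)) * (l i) ^ k / (Nat.factorial k))) •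
            ((ProbabilityTheory.gaussianReal (m i) ⟨(σ i) ^ 2, sq_nonneg _⟩).conv
              (convPow νY k)))
      (Measure.pi fun i =>
        ENNReal.ofReal (1 - l i * Real.exp (-(l i))) •
            ProbabilityTheory.gaussianReal (m i) ⟨(σ i) ^ 2, sq_nonneg _⟩ +
          ENNReal.ofReal (l i * Real.exp (-(l i))) •
            ((ProbabilityTheory.gaussianReal (m i) ⟨(σ i) ^ 2, sq_nonneg _⟩).conv νY)) ≤
      2 * Real.sqrt (∑ i, (l i) ^ 2) := by
  -- instance search does not unify through the anonymous `ℝ≥0` constructor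
  have := fun i =>
    ProbabilityTheory.instIsProbabilityMeasureGaussianReal (m i) ⟨σ i ^ 2, sq_nonneg (σ i)⟩
  have := fun i : Fin n => isProbabilityMeasure_compoundPoisson
    (ProbabilityTheory.gaussianReal (m i) ⟨(σ i) ^ 2, sq_nonneg (σ i)⟩) νY (hl i).le
  have := fun i : Fin n => isProbabilityMeasure_bernoulliCompound
    (ProbabilityTheory.gaussianReal (m i) ⟨(σ i) ^ 2, sq_nonneg (σ i)⟩) νY (hl i).le
  calc _ ≤ Real.sqrt (∑ i, l i ^ 2) := tvDist_le_sqrt_of_le <| (tvDist_pi_le _ _).trans <|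
        Finset.sum_le_sum fun i _ => tvDist_compoundPoisson_bernoulliCompound_le _ _ (hl i).le
    _ ≤ 2 * Real.sqrt (∑ i, l i ^ 2) := by linarith [Real.sqrt_nonneg (∑ i, l i ^ 2)]

/-- For each `i`, `Q_{N_i} * Q_{(Y,P_i)}` (the law of `N_i + Σ_{j=1}^{P_i} Y_j`, with
`N_i ~ N(m_i, σ_i²)`, `P_i` Poisson of parameter `λ_i > 0` and `(Y_j)` i.i.d. of law `νY`,
all independent) is a Poisson mixture of convolution powers, and `Q_{N_i} * Q_{(Y₁,ε_i)}`
(the law of `N_i + ε_i Y₁` with `ε_i` Bernoulli of parameter `α_i = λ_i e^{-λ_i}`) is the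
corresponding Bernoulli mixture.  Then
`‖⊗ᵢ (Q_{N_i} * Q_{(Y,P_i)}) - ⊗ᵢ (Q_{N_i} * Q_{(Y₁,ε_i)})‖_TV ≤ 2√(Σᵢ λ_i²)`. -/
theorem tvDist_pi_compoundPoisson_bernoulli {n : ℕ} (m : Fin n → ℝ) (σ : Fin n → ℝ)
    (l : Fin n → ℝ) (hσ : ∀ i, 0 < σ i) (hl : ∀ i, 0 < l i)
    (νY : Measure ℝ) [IsProbabilityMeasure νY] :
    tvDist
      (Measure.pi fun i =>
        Measure.sum fun k : ℕ =>
          (ENNReal.ofReal (Real.exp (-(l i)) * (l i) ^ k / (Nat.factorial k))) •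
            ((ProbabilityTheory.gaussianReal (m i) ⟨(σ i) ^ 2, sq_nonneg _⟩).conv
              (convPow νY k)))
      (Measure.pi fun i =>
        ENNReal.ofReal (1 - l i * Real.exp (-(l i))) •
            ProbabilityTheory.gaussianReal (m i) ⟨(σ i) ^ 2, sq_nonneg _⟩ +
          ENNReal.ofReal (l i * Real.exp (-(l i))) •
            ((ProbabilityTheory.gaussianReal (m i) ⟨(σ i) ^ 2, sq_nonneg _⟩).conv νY)) ≤
      2 * Real.sqrt (∑ i, (l i) ^ 2) :=
  tvDist_pi_compoundPoisson_bernoulli_general m σ l hl νY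
end

section
/- For i = 1,…,n let N_i ~ N(m_i, σ_i²) with |m_i| ≤ 1/3, ε_i Bernoulli(α_i), Y a ℤ-valued random variable, all independent, and let Q_i be the law of N_i + ε_i Y. With the rounding kernel K(x,A) = 1_A(x - [x]) applied coordinatewise, ‖⊗_{i=1}^n K(Q_i) - ⊗_{i=1}^n law(N_i)‖_TV ≤ √(2 Σ_{i=1}^n [(6/σ_i)φ(1/(6σ_i)) + 4Φ(-1/(6σ_i))]). -/
/-!
The map `x ↦ x - [x]` is `1`-periodic, so it erases the integer shift `ε_i Y`: `K(Q_i)` is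
exactly the law of `N_i - [N_i]`. The coordinatewise rounding is the identity on the box
`[-1/2, 1/2)ⁿ`, so the total variation distance is at most the probability `p` that some `N_i`
leaves `[-1/2, 1/2)`. Since `|m_i| ≤ 1/3`, such an `N_i` is at distance at least `1/6` from its
mean, and a union bound gives `p ≤ ∑ᵢ 2Φ(-1/(6σ_i))`. Finally `p ≤ √p` as `p ≤ 1`, and the sum
under the root in the claimed bound dominates `∑ᵢ 2Φ(-1/(6σ_i))`.
-/

open MeasureTheory ProbabilityTheory

/-- Standard normal density. -/
noncomputable def stdNormalPDF (t : ℝ) : ℝ :=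
  (Real.sqrt (2 * Real.pi))⁻¹ * Real.exp (-t ^ 2 / 2)

/-- Standard normal cumulative distribution function. -/
noncomputable def stdNormalCDF (t : ℝ) : ℝ := ∫ u in Set.Iic t, stdNormalPDF u

open Set Function

lemma measurable_round : Measurable (round : ℝ → ℤ) := by
  rw [show (round : ℝ → ℤ) = fun x => ⌊x + 1 / 2⌋ from funext round_eq]
  exact Int.measurable_floor.comp (measurable_add_const _)

lemma measurable_sub_round : Measurable (fun x : ℝ => x - (round x : ℝ)) :=
  measurable_id.sub (measurable_from_top.comp measurable_round)

lemma periodic_sub_round : Periodic (fun x : ℝ => x - (round x : ℝ)) 1 := by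
  intro x
  simp only [round_add_one, Int.cast_add, Int.cast_one]
  ring

section Periodic

variable {β : Type*} [MeasurableSpace β] {f : ℝ → β}

lemma map_conv_map_intCast_of_periodic (hf : Measurable f) (hper : Periodic f 1)
    (μ : Measure ℝ) [SFinite μ] (νZ : Measure ℤ) [IsProbabilityMeasure νZ] :
    (μ.conv (νZ.map ((↑) : ℤ → ℝ))).map f = μ.map f := by
  have hcast : Measurable ((↑) : ℤ → ℝ) := measurable_from_top
  have hshift : f ∘ (fun p : ℝ × ℝ => p.1 + p.2) ∘ Prod.map id ((↑) : ℤ → ℝ) = f ∘ Prod.fst := by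
    funext p
    simpa using hper.int_mul p.2 p.1
  conv_lhs => rw [Measure.conv, ← Measure.map_id (μ := μ)]
  rw [Measure.map_prod_map _ _ measurable_id hcast,
    Measure.map_map measurable_add (measurable_id.prodMap hcast),
    Measure.map_map hf (measurable_add.comp (measurable_id.prodMap hcast)), hshift,
    ← Measure.map_map hf measurable_fst, Measure.map_fst_prod, measure_univ, one_smul]

lemma map_mixture_conv_map_intCast_of_periodic (hf : Measurable f) (hper : Periodic f 1)
    (μ : Measure ℝ) [SFinite μ] (νZ : Measure ℤ) [IsProbabilityMeasure νZ] {a : ℝ}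
    (ha : a ∈ Icc (0 : ℝ) 1) :
    (ENNReal.ofReal (1 - a) • μ + ENNReal.ofReal a • μ.conv (νZ.map ((↑) : ℤ → ℝ))).map f =
      μ.map f := by
  rw [Measure.map_add _ _ hf, Measure.map_smul, Measure.map_smul,
    map_conv_map_intCast_of_periodic hf hper, ← add_smul,
    ← ENNReal.ofReal_add (sub_nonneg.2 ha.2) ha.1, sub_add_cancel, ENNReal.ofReal_one, one_smul]

end Periodic

section TotalVariation

variable {α : Type*} [MeasurableSpace α] {μ : Measure α} [IsFiniteMeasure μ]

lemma measureReal_le_add_compl_of_inter_subset {s t E : Set α} (h : s ∩ E ⊆ t) :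
    μ.real s ≤ μ.real t + μ.real Eᶜ :=
  (measureReal_mono fun x hx => (em (x ∈ E)).imp (fun hxE => h ⟨hx, hxE⟩) id).trans
    (measureReal_union_le t Eᶜ)

lemma tvDist_map_le_of_eqOn {G : α → α} (hG : Measurable G) {E : Set α} (hGE : EqOn G id E) :
    tvDist (μ.map G) μ ≤ μ.real Eᶜ := by
  refine Real.iSup_le (fun A => ?_) measureReal_nonneg
  have hA : G ⁻¹' A.1 ∩ E = A.1 ∩ E := by
    ext x
    constructor <;> rintro ⟨hx, hxE⟩ <;> refine ⟨?_, hxE⟩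
    · simpa [hGE hxE] using hx
    · simpa [mem_preimage, hGE hxE] using hx
  have h₁ := measureReal_le_add_compl_of_inter_subset (μ := μ) (hA.trans_subset inter_subset_left)
  have h₂ := measureReal_le_add_compl_of_inter_subset (μ := μ)
    (hA.symm.trans_subset inter_subset_left)
  rw [Measure.map_apply hG A.2, ← measureReal_def, ← measureReal_def, abs_sub_le_iff]
  constructor <;> linarith

end TotalVariation

lemma measureReal_pi_compl_univ_pi_le {ι : Type*} [Fintype ι] {α : ι → Type*}
    [∀ i, MeasurableSpace (α i)] (P : ∀ i, Measure (α i)) [∀ i, IsProbabilityMeasure (P i)]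
    {s : ∀ i, Set (α i)} (hs : ∀ i, MeasurableSet (s i)) :
    (Measure.pi P).real (univ.pi s)ᶜ ≤ ∑ i, (P i).real (s i)ᶜ := by
  have hcover : (univ.pi s)ᶜ = ⋃ i, eval i ⁻¹' (s i)ᶜ := by
    ext x
    simp
  rw [hcover]
  refine (measureReal_iUnion_fintype_le _).trans (Finset.sum_le_sum fun i _ => ?_)
  rw [(measurePreserving_eval P i).measureReal_preimage (hs i).compl.nullMeasurableSet]

section Gaussian

/-- The anonymous constructor `⟨σ ^ 2, _⟩` has type `{r : ℝ // 0 ≤ r}` rather than `ℝ≥0`, which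
hides the instance for `gaussianReal μ v` from type class search. -/
instance isProbabilityMeasure_gaussianReal_sq (m σ : ℝ) :
    IsProbabilityMeasure (gaussianReal m ⟨σ ^ 2, sq_nonneg σ⟩) :=
  instIsProbabilityMeasureGaussianReal _ _

lemma gaussianReal_zero_one_real_Iic (t : ℝ) :
    (gaussianReal 0 1).real (Iic t) = stdNormalCDF t := by
  rw [measureReal_def, gaussianReal_apply_eq_integral 0 one_ne_zero, ENNReal.toReal_ofReal
    (setIntegral_nonneg measurableSet_Iic fun x _ => gaussianPDFReal_nonneg 0 1 x)]
  simp [stdNormalCDF, stdNormalPDF, gaussianPDFReal]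

lemma stdNormalPDF_nonneg (t : ℝ) : 0 ≤ stdNormalPDF t := by
  unfold stdNormalPDF
  positivity

lemma stdNormalCDF_nonneg (t : ℝ) : 0 ≤ stdNormalCDF t :=
  gaussianReal_zero_one_real_Iic t ▸ measureReal_nonneg

lemma gaussianReal_zero_one_map_mul_add (c m : ℝ) :
    (gaussianReal 0 1).map (fun x => c * x + m) = gaussianReal m ⟨c ^ 2, sq_nonneg c⟩ := by
  have hcomp : (fun x : ℝ => c * x + m) = (· + m) ∘ (c * ·) := rfl
  rw [hcomp, ← Measure.map_map (measurable_add_const m) (measurable_const_mul c),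
    gaussianReal_map_const_mul, gaussianReal_map_add_const]
  congr 1
  · simp
  · ext; simp; rfl

variable {σ : ℝ} (m : ℝ) (hσ : 0 < σ)
include hσ

lemma gaussianReal_real_Iic (s : ℝ) :
    (gaussianReal m ⟨σ ^ 2, sq_nonneg σ⟩).real (Iic s) = stdNormalCDF ((s - m) / σ) := by
  have hpre : (fun x => σ * x + m) ⁻¹' Iic s = Iic ((s - m) / σ) := by
    ext x
    simp only [mem_preimage, mem_Iic, le_div_iff₀ hσ]
    constructor <;> intro h <;> linarith
  rw [← gaussianReal_zero_one_map_mul_add, map_measureReal_apply (by fun_prop) measurableSet_Iic,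
    hpre, gaussianReal_zero_one_real_Iic]

lemma gaussianReal_real_Ici (s : ℝ) :
    (gaussianReal m ⟨σ ^ 2, sq_nonneg σ⟩).real (Ici s) = stdNormalCDF ((m - s) / σ) := by
  have hpre : (fun x => -σ * x + m) ⁻¹' Ici s = Iic ((m - s) / σ) := by
    ext x
    simp only [mem_preimage, mem_Ici, mem_Iic, le_div_iff₀ hσ]
    constructor <;> intro h <;> linarith
  have hvar : (⟨σ ^ 2, sq_nonneg σ⟩ : NNReal) = ⟨(-σ) ^ 2, sq_nonneg (-σ)⟩ :=
    Subtype.ext (neg_sq σ).symm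
  rw [hvar, ← gaussianReal_zero_one_map_mul_add,
    map_measureReal_apply (by fun_prop) measurableSet_Ici, hpre, gaussianReal_zero_one_real_Iic]

lemma gaussianReal_real_compl_Ioo_le (r : ℝ) :
    (gaussianReal m ⟨σ ^ 2, sq_nonneg σ⟩).real (Ioo (m - r) (m + r))ᶜ ≤
      2 * stdNormalCDF (-r / σ) := by
  have hcover : (Ioo (m - r) (m + r))ᶜ ⊆ Iic (m - r) ∪ Ici (m + r) := by
    intro x hx
    simp only [mem_compl_iff, mem_Ioo, not_and_or, not_lt] at hx
    exact hx
  refine (measureReal_mono hcover).trans ((measureReal_union_le _ _).trans_eq ?_)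
  rw [gaussianReal_real_Iic m hσ, gaussianReal_real_Ici m hσ]
  ring_nf

end Gaussian

lemma gaussianReal_real_compl_Ico_le {m σ : ℝ} (hσ : 0 < σ) (hm : |m| ≤ 1 / 3) :
    (gaussianReal m ⟨σ ^ 2, sq_nonneg σ⟩).real (Ico (-(1 / 2)) (1 / 2))ᶜ ≤
      2 * stdNormalCDF (-1 / (6 * σ)) := by
  have hsub : Ioo (m - 1 / 6) (m + 1 / 6) ⊆ Ico (-(1 / 2)) (1 / 2) := fun x hx => by
    obtain ⟨h₁, h₂⟩ := abs_le.1 hm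
    exact ⟨by linarith [hx.1], by linarith [hx.2]⟩
  have harg : -1 / (6 * σ) = -(1 / 6) / σ := by field_simp
  exact harg ▸ (measureReal_mono (compl_subset_compl.2 hsub)).trans
    (gaussianReal_real_compl_Ioo_le m hσ _)

/-- For `i = 1,…,n`, let `Q_i` be the law of `N_i + ε_i Y` where `N_i ~ N(m_i, σ_i²)` with
`|m_i| ≤ 1/3`, `ε_i` is Bernoulli(`α_i`) and `Y` is `ℤ`-valued (law the pushforward of
`νZ` under `Int.cast`), all independent, i.e. `Q_i = (1-α_i)•N(m_i,σ_i²) +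
α_i•(N(m_i,σ_i²) ∗ νY)`.  Applying the rounding kernel `K(x,A) = 1_A(x - [x])`
coordinatewise,
`‖⊗ᵢ K(Q_i) - ⊗ᵢ N(m_i,σ_i²)‖_TV ≤ √(2 Σᵢ [(6/σ_i)φ(1/(6σ_i)) + 4Φ(-1/(6σ_i))])`. -/
theorem tvDist_pi_rounding_kernel {n : ℕ} (m σ a : Fin n → ℝ) (hσ : ∀ i, 0 < σ i)
    (hm : ∀ i, |m i| ≤ 1 / 3) (ha : ∀ i, a i ∈ Set.Icc (0 : ℝ) 1)
    (νZ : Measure ℤ) [IsProbabilityMeasure νZ] :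
    tvDist
      (Measure.pi fun i =>
        Measure.map (fun x : ℝ => x - (round x : ℝ))
          (ENNReal.ofReal (1 - a i) • gaussianReal (m i) ⟨(σ i) ^ 2, sq_nonneg _⟩ +
            ENNReal.ofReal (a i) •
              ((gaussianReal (m i) ⟨(σ i) ^ 2, sq_nonneg _⟩).conv
                (Measure.map (fun k : ℤ => (k : ℝ)) νZ))))
      (Measure.pi fun i => gaussianReal (m i) ⟨(σ i) ^ 2, sq_nonneg _⟩) ≤
    Real.sqrt (2 * ∑ i,
      ((6 / σ i) * stdNormalPDF (1 / (6 * σ i)) + 4 * stdNormalCDF (-1 / (6 * σ i)))) := by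
  set g : ℝ → ℝ := fun x => x - (round x : ℝ)
  set P : Fin n → Measure ℝ := fun i => gaussianReal (m i) ⟨(σ i) ^ 2, sq_nonneg _⟩
  set E : Set (Fin n → ℝ) := univ.pi fun _ => Ico (-(1 / 2)) (1 / 2)
  have hround : ∀ i, ((ENNReal.ofReal (1 - a i) • P i + ENNReal.ofReal (a i) •
      (P i).conv (νZ.map ((↑) : ℤ → ℝ)))).map g = (P i).map g := fun i =>
    map_mixture_conv_map_intCast_of_periodic measurable_sub_round periodic_sub_round _ νZ (ha i)
  have hpi : Measure.pi (fun i => (P i).map g) = (Measure.pi P).map (fun x i => g (x i)) :=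
    (Measure.pi_map_pi fun _ => measurable_sub_round.aemeasurable).symm
  have hfix : EqOn (fun x i => g (x i)) id E := fun x hx =>
    funext fun i => by simp [g, round_eq_zero_iff.2 (hx i (mem_univ i))]
  have htail : (Measure.pi P).real Eᶜ ≤ ∑ i, 2 * stdNormalCDF (-1 / (6 * σ i)) :=
    (measureReal_pi_compl_univ_pi_le P fun _ => measurableSet_Ico).trans
      (Finset.sum_le_sum fun i _ => gaussianReal_real_compl_Ico_le (hσ i) (hm i))
  have hsum : ∑ i, 2 * stdNormalCDF (-1 / (6 * σ i)) ≤ 2 * ∑ i,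
      ((6 / σ i) * stdNormalPDF (1 / (6 * σ i)) + 4 * stdNormalCDF (-1 / (6 * σ i))) := by
    rw [Finset.mul_sum]
    refine Finset.sum_le_sum fun i _ => ?_
    have hpdf : 0 ≤ 6 / σ i * stdNormalPDF (1 / (6 * σ i)) :=
      mul_nonneg (div_nonneg (by norm_num) (hσ i).le) (stdNormalPDF_nonneg _)
    linarith [stdNormalCDF_nonneg (-1 / (6 * σ i))]
  rw [funext hround, hpi]
  have hG : Measurable fun x : Fin n → ℝ => fun i => g (x i) :=
    measurable_pi_lambda _ fun i => measurable_sub_round.comp (measurable_pi_apply i)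
  refine (tvDist_map_le_of_eqOn hG hfix).trans (Real.le_sqrt_of_sq_le ?_)
  nlinarith [measureReal_nonneg (μ := Measure.pi P) (s := Eᶜ),
    measureReal_le_one (μ := Measure.pi P) (s := Eᶜ)]
end
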